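/- Suppose |r(λ_n)| > 0 and X_n* B Y_0 is invertible, and define the (N−n)×n matrix W = (X_n'* B Y_0)(X_n* B Y_0)^{-1} with columns w_1,…,w_n. Then the constant α_j in the subspace-iteration error bound may be taken as α_j = ‖w_j‖_2: for all k ≥ 1 and each 1 ≤ j ≤ n, there exists a vector e_j with ‖e_j‖_B ≤ ‖w_j‖_2 · |r(λ_{n+1})/r(λ_j)|^k such that x_j + e_j lies in the column span of Z_k. -/

import Mathlib

open Matrix ComplexOrder

/-!
Write `G = X⁻¹ Y₀ = Xᴴ B Y₀` for the coordinates of `Y₀` in the eigenbasis: its first `n` rows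
form `U = X_nᴴ B Y₀` and its last `N - n` rows form `X_n'ᴴ B Y₀`. Every `W_k` is invertible, so
`Z_k` has the same column span as `r(M)^k Y₀ = X r(Λ)^k G`. The vector `c = G U⁻¹ e_j` has top
block `e_j` and bottom block `w_j`, hence the vector `X r(Λ)^k c / r(λ_j)^k` of that span equals
`x_j + X h`, where `h` vanishes on the top block and has entries `(r(λ_{n+m}) / r(λ_j))^k w_{mj}`
below. Since `Xᴴ B X = 1`, `‖X h‖_B = ‖h‖₂`, and `|r(λ_{n+m})| ≤ |r(λ_{n+1})|` gives the bound.
-/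

namespace Matrix

variable {ι κ l m n α : Type*}

theorem submatrix_id_mul [Fintype ι] [Mul α] [AddCommMonoid α] (M : Matrix m ι α) (f : κ → m)
    (N : Matrix ι l α) : M.submatrix f id * N = (M * N).submatrix f id := by
  rw [submatrix_mul M N f id id Function.bijective_id, submatrix_id_id]

theorem conjTranspose_submatrix_id_mul_mul [Fintype m] [Star α] [Mul α] [AddCommMonoid α]
    (X : Matrix m ι α) (f : κ → ι) (B : Matrix m m α) (Y : Matrix m l α) :
    (X.submatrix id f)ᴴ * B * Y = (Xᴴ * B * Y).submatrix f id := by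
  rw [conjTranspose_submatrix, submatrix_id_mul, submatrix_id_mul]

theorem mulVec_comp [Fintype n] [NonUnitalNonAssocSemiring α] (G : Matrix m n α) (f : κ → m)
    (v : n → α) : (G *ᵥ v) ∘ f = G.submatrix f id *ᵥ v :=
  rfl

theorem star_mulVec_dotProduct_mulVec_mulVec [Fintype m] [DecidableEq m] [CommSemiring α]
    [StarRing α] {X B : Matrix m m α} (hX : Xᴴ * B * X = 1) (v : m → α) :
    star (X *ᵥ v) ⬝ᵥ (B *ᵥ (X *ᵥ v)) = star v ⬝ᵥ v := by
  rw [mulVec_mulVec, dotProduct_mulVec, star_mulVec, vecMul_vecMul, ← Matrix.mul_assoc, hX,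
    vecMul_one]

theorem re_star_dotProduct_self [Fintype n] {𝕜 : Type*} [RCLike 𝕜] (v : n → 𝕜) :
    RCLike.re (star v ⬝ᵥ v) = ∑ i, ‖v i‖ ^ 2 := by
  simp only [dotProduct, Pi.star_apply, RCLike.star_def, RCLike.conj_mul, map_sum]
  norm_cast

section CommRing

variable [CommRing α] [Fintype n] [DecidableEq n]

theorem range_mulVecLin_mul_of_isUnit (M : Matrix m n α) {C : Matrix n n α} (hC : IsUnit C) :
    LinearMap.range (M * C).mulVecLin = LinearMap.range M.mulVecLin := by
  rw [mulVecLin_mul, LinearMap.range_comp_of_range_eq_top _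
    (LinearMap.range_eq_top.2 (mulVec_surjective_iff_isUnit.2 hC))]

theorem range_mulVecLin_subspaceIteration [Fintype m] [DecidableEq m] {P : Matrix m m α}
    {Y Z : ℕ → Matrix m n α} {W : ℕ → Matrix n n α} (hZ : ∀ k, Z (k + 1) = P * Y k)
    (hY : ∀ k, Y (k + 1) = Z (k + 1) * W (k + 1)) (hW : ∀ k, IsUnit (W (k + 1))) (k : ℕ) :
    LinearMap.range (Z (k + 1)).mulVecLin = LinearMap.range (P ^ (k + 1) * Y 0).mulVecLin := by
  induction k with
  | zero => rw [hZ, pow_one]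
  | succ k ih =>
    rw [hZ, hY, ← Matrix.mul_assoc, range_mulVecLin_mul_of_isUnit _ (hW k), mulVecLin_mul,
      LinearMap.range_comp, ih, ← LinearMap.range_comp, ← mulVecLin_mul, pow_succ' P (k + 1),
      Matrix.mul_assoc]

theorem conj_nonsing_inv_pow [Fintype m] [DecidableEq m] {X : Matrix m m α} (hX : X⁻¹ * X = 1)
    (P : Matrix m m α) (k : ℕ) : (X * P * X⁻¹) ^ k = X * P ^ k * X⁻¹ := by
  have : Invertible X := invertibleOfLeftInverse X X⁻¹ hX
  simpa using Units.conj_pow (unitOfInvertible X) P k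

end CommRing

theorem mulVec_div_pow_mul_mem_range [Fintype m] [DecidableEq m] [Fintype n] [Field α]
    (X : Matrix m m α) (d : m → α) (G : Matrix m n α) (v : n → α) (i₀ : m) (k : ℕ) :
    X *ᵥ (fun i => (d i / d i₀) ^ k * (G *ᵥ v) i) ∈
      LinearMap.range (X * diagonal d ^ k * G).mulVecLin := by
  refine ⟨(d i₀ ^ k)⁻¹ • v, ?_⟩
  rw [mulVecLin_apply, mulVec_smul, ← mulVec_mulVec, ← mulVec_mulVec, ← mulVec_smul]
  congr 1
  ext i
  simp only [Pi.smul_apply, diagonal_pow, mulVec_diagonal, Pi.pow_apply, smul_eq_mul, div_pow]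
  ring

end Matrix

theorem Real.sqrt_sum_norm_sq_le_of_injective {ι κ E F : Type*} [Fintype ι] [Fintype κ]
    [SeminormedAddCommGroup E] [SeminormedAddCommGroup F] {e : κ → ι} (he : e.Injective)
    {h : ι → E} (hzero : ∀ i ∉ Set.range e, h i = 0) (w : κ → F) {ρ : ℝ} (hρ : 0 ≤ ρ)
    (hle : ∀ m, ‖h (e m)‖ ≤ ‖w m‖ * ρ) :
    √(∑ i, ‖h i‖ ^ 2) ≤ √(∑ m, ‖w m‖ ^ 2) * ρ := by
  rw [← Fintype.sum_of_injective e he (fun m => ‖h (e m)‖ ^ 2) _ (by simp_all) fun _ => rfl,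
    ← Real.sqrt_sq hρ, ← Real.sqrt_mul (by positivity), Finset.sum_mul]
  gcongr with m
  rw [← mul_pow]
  exact pow_le_pow_left₀ (norm_nonneg _) (hle m) 2

def finShift {n N : ℕ} (hnN : n ≤ N) (m : Fin (N - n)) : Fin N :=
  ⟨n + m, by omega⟩

theorem finShift_injective {n N : ℕ} (hnN : n ≤ N) : (finShift hnN).Injective :=
  fun a b h => Fin.ext (by simpa [finShift] using congrArg Fin.val h)

theorem mem_range_castLE_of_notMem_range_finShift {n N : ℕ} (hnN : n ≤ N) {i : Fin N}
    (hi : i ∉ Set.range (finShift hnN)) : i ∈ Set.range (Fin.castLE hnN) := by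
  by_contra h
  have : n ≤ i := by
    by_contra hlt
    exact h ⟨⟨i, by omega⟩, rfl⟩
  exact hi ⟨⟨i - n, by omega⟩, Fin.ext (by simp [finShift]; omega)⟩

theorem sqrt_sum_norm_sq_div_pow_mul_sub_single_le {n N : ℕ} (hnN : n < N) {d c : Fin N → ℂ}
    (hd : ∀ i i', i ≤ i' → ‖d i'‖ ≤ ‖d i‖) {j : Fin n} (hdj : d (Fin.castLE hnN.le j) ≠ 0)
    (hc_head : c ∘ Fin.castLE hnN.le = Pi.single j 1) {w : Fin (N - n) → ℂ}
    (hc_tail : c ∘ finShift hnN.le = w) (k : ℕ) :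
    √(∑ i, ‖(d i / d (Fin.castLE hnN.le j)) ^ k * c i -
        (Pi.single (Fin.castLE hnN.le j) 1 : Fin N → ℂ) i‖ ^ 2) ≤
      √(∑ m, ‖w m‖ ^ 2) * (‖d ⟨n, hnN⟩‖ / ‖d (Fin.castLE hnN.le j)‖) ^ k := by
  refine Real.sqrt_sum_norm_sq_le_of_injective (finShift_injective hnN.le) (fun i hi => ?_) w
    (by positivity) fun m => ?_
  · obtain ⟨i, rfl⟩ := mem_range_castLE_of_notMem_range_finShift hnN.le hi
    rw [show c (Fin.castLE hnN.le i) = _ from congrFun hc_head i]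
    simp only [Pi.single_apply, Fin.castLE_inj]
    split_ifs with hij
    · simp [hij, hdj]
    · simp
  · have hne : finShift hnN.le m ≠ Fin.castLE hnN.le j := fun h => by
      have := congrArg Fin.val h
      simp [finShift] at this
      omega
    rw [Pi.single_eq_of_ne hne, sub_zero, ← hc_tail, Function.comp_apply, norm_mul, norm_pow,
      norm_div, mul_comm]
    gcongr
    exact hd _ _ (Fin.le_def.2 (by simp [finShift]))

/-- **Explicit constant in the FEAST convergence bound** (Güttel–Polizzi–Tang–Viaud,
proof of Theorem 2.2).  With `W = (X_n'ᴴ B Y_0)(X_nᴴ B Y_0)⁻¹` (columns `w_1,…,w_n`),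
the constant `α_j` may be taken as `‖w_j‖_2`: for all `k ≥ 1` and each `j ≤ n` there
is a vector `e_j` with `‖e_j‖_B ≤ ‖w_j‖_2 · |r(λ_{n+1})/r(λ_j)|^k` such that
`x_j + e_j` lies in the column span of `Z_k`. -/
theorem feast_subspace_iteration_explicit_constant
    (N n : ℕ) (hnN : n < N)
    (B X : Matrix (Fin N) (Fin N) ℂ)
    (lam : Fin N → ℝ)
    (hX : Xᴴ * B * X = 1)
    (r : ℝ → ℂ)
    (hord : ∀ i j : Fin N, i ≤ j → ‖r (lam j)‖ ≤ ‖r (lam i)‖)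
    (rM : Matrix (Fin N) (Fin N) ℂ)
    (hrM : rM = X * Matrix.diagonal (fun i => r (lam i)) * X⁻¹)
    (Y Z : ℕ → Matrix (Fin N) (Fin n) ℂ)
    (W : ℕ → Matrix (Fin n) (Fin n) ℂ)
    (hZ : ∀ k, Z (k + 1) = rM * Y k)
    (hW : ∀ k, (W (k + 1))ᴴ * ((Z (k + 1))ᴴ * B * Z (k + 1)) * W (k + 1) = 1)
    (hY : ∀ k, Y (k + 1) = Z (k + 1) * W (k + 1))
    (Xn : Matrix (Fin N) (Fin n) ℂ)
    (hXn : Xn = X.submatrix id (Fin.castLE hnN.le))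
    (Xn' : Matrix (Fin N) (Fin (N - n)) ℂ)
    (hXn' : Xn' = X.submatrix id (fun j : Fin (N - n) => (⟨n + (j : ℕ), by omega⟩ : Fin N)))
    (hrn : 0 < ‖r (lam ⟨n - 1, by omega⟩)‖)
    (hY0 : IsUnit (Xnᴴ * B * Y 0))
    (Bnorm : (Fin N → ℂ) → ℝ)
    (hBnorm : ∀ w, Bnorm w = Real.sqrt ((star w ⬝ᵥ B.mulVec w).re))
    (Wm : Matrix (Fin (N - n)) (Fin n) ℂ)
    (hWm : Wm = (Xn'ᴴ * B * Y 0) * (Xnᴴ * B * Y 0)⁻¹) :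
    ∀ k, 1 ≤ k → ∀ j : Fin n,
      ∃ e : Fin N → ℂ,
        Bnorm e ≤ Real.sqrt (∑ i, ‖Wm i j‖ ^ 2) *
          (‖r (lam ⟨n, hnN⟩)‖ /
            ‖r (lam (Fin.castLE hnN.le j))‖) ^ k ∧
        ((fun i => X i (Fin.castLE hnN.le j)) + e) ∈
          LinearMap.range (Z k).mulVecLin := by
  intro k hk j
  obtain ⟨k, rfl⟩ := Nat.exists_eq_add_of_le' hk
  set j' := Fin.castLE hnN.le j
  have hrj : r (lam j') ≠ 0 :=
    norm_pos_iff.mp (hrn.trans_le (hord _ _ (Fin.le_def.2 (by simp [j']; omega))))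
  set c := (Xᴴ * B * Y 0) *ᵥ ((Xnᴴ * B * Y 0)⁻¹ *ᵥ Pi.single j 1)
  have hc_head : c ∘ Fin.castLE hnN.le = Pi.single j 1 := by
    rw [mulVec_comp, ← conjTranspose_submatrix_id_mul_mul, ← hXn, mulVec_mulVec,
      mul_nonsing_inv _ ((isUnit_iff_isUnit_det _).mp hY0), one_mulVec]
  have hc_tail : c ∘ finShift hnN.le = Wm.col j := by
    rw [mulVec_comp, ← conjTranspose_submatrix_id_mul_mul,
      ← show Xn' = X.submatrix id (finShift hnN.le) from hXn', mulVec_mulVec, ← hWm,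
      mulVec_single_one]
  set g : Fin N → ℂ := fun i => (r (lam i) / r (lam j')) ^ (k + 1) * c i
  refine ⟨X *ᵥ (g - Pi.single j' 1), ?_, ?_⟩
  · rw [hBnorm, star_mulVec_dotProduct_mulVec_mulVec hX, ← RCLike.re_to_complex,
      re_star_dotProduct_self]
    exact sqrt_sum_norm_sq_div_pow_mul_sub_single_le hnN hord hrj hc_head hc_tail (k + 1)
  · have hXinv : X⁻¹ = Xᴴ * B := inv_eq_left_inv hX
    have hWu (k : ℕ) : IsUnit (W (k + 1)) := IsUnit.of_mul_eq_one_right _ (hW k)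
    change X.col j' + X *ᵥ (g - Pi.single j' 1) ∈ _
    rw [mulVec_sub, mulVec_single_one, add_sub_cancel, range_mulVecLin_subspaceIteration hZ hY hWu,
      hrM, conj_nonsing_inv_pow (hXinv ▸ hX), hXinv, Matrix.mul_assoc (X * _)]
    exact mulVec_div_pow_mul_mem_range X _ _ _ j' (k + 1)
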